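/- arXiv:math/0607784 — 4 statements merged into one kernel-verified Lean document; each statement's English description precedes it below -/
import Mathlib

section
/- If N : ℝ^m → ℝ^m is a smooth (1,1)-tensor field on ℝ^m (a smooth matrix-valued function N(x) = (N^i_j(x))), then for the constant volume form μ = dx^1∧⋯∧dx^m and its dual top multivector η, and for the deformed Lie-derivative operators of the Lie algebroid structure with anchor ρ_N(X) = N X and bracket [X,Y]_N = [N X, Y] + [X, N Y] − N[X,Y], one has for every coordinate vector field X = ∂/∂x^k: (Lie^N_X η)⊗μ + η⊗(Lie_{NX} μ) = ⟨d(tr N), X⟩ η⊗μ. In particular, the modular cocycle of the Lie algebroid (TM, [·,·]_N, ρ_N) with respect to (η, μ) equals the 1-form d(tr N). -/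
open scoped BigOperators

attribute [local instance] Matrix.normedAddCommGroup Matrix.normedSpace

noncomputable section

variable {m : ℕ}

/-- Partial derivative `∂f/∂x^j` of a real-valued function on `ℝ^m`. -/
def pd (j : Fin m) (f : (Fin m → ℝ) → ℝ) (x : Fin m → ℝ) : ℝ :=
  fderiv ℝ f x (Pi.single j 1)

/-- The usual Lie bracket of vector fields on `ℝ^m`. -/
def lieB (X Y : (Fin m → ℝ) → Fin m → ℝ) : (Fin m → ℝ) → Fin m → ℝ :=
  fun x => fderiv ℝ Y x (X x) - fderiv ℝ X x (Y x)

/-- Action of a (1,1)-tensor field `N` on a vector field. -/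
def Napp (N : (Fin m → ℝ) → Matrix (Fin m) (Fin m) ℝ)
    (X : (Fin m → ℝ) → Fin m → ℝ) : (Fin m → ℝ) → Fin m → ℝ :=
  fun x => (N x).mulVec (X x)

/-- The deformed bracket `[X,Y]_N = [NX,Y] + [X,NY] - N[X,Y]` of the Lie algebroid
`(TM, [·,·]_N, ρ_N)` with anchor `ρ_N(X) = NX`. -/
def defBracket (N : (Fin m → ℝ) → Matrix (Fin m) (Fin m) ℝ)
    (X Y : (Fin m → ℝ) → Fin m → ℝ) : (Fin m → ℝ) → Fin m → ℝ :=
  lieB (Napp N X) Y + lieB X (Napp N Y) - Napp N (lieB X Y)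

/-- The Nijenhuis torsion `T_N(X,Y) = N[NX,Y] + N[X,NY] - N²[X,Y] - [NX,NY]`. -/
def torsion (N : (Fin m → ℝ) → Matrix (Fin m) (Fin m) ℝ)
    (X Y : (Fin m → ℝ) → Fin m → ℝ) : (Fin m → ℝ) → Fin m → ℝ :=
  Napp N (lieB (Napp N X) Y) + Napp N (lieB X (Napp N Y))
    - Napp N (Napp N (lieB X Y)) - lieB (Napp N X) (Napp N Y)

/-- The `k`-th coordinate vector field `∂/∂x^k`. -/
def cvf (k : Fin m) : (Fin m → ℝ) → Fin m → ℝ := fun _ => Pi.single k 1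

lemma diff_entry (N : (Fin m → ℝ) → Matrix (Fin m) (Fin m) ℝ)
    (hN : ContDiff ℝ (⊤ : ℕ∞) N) (j i : Fin m) : Differentiable ℝ fun y => N y j i := by
  have h : Differentiable ℝ N := hN.differentiable (by simp)
  intro x
  exact differentiableAt_pi.mp (differentiableAt_pi.mp (h x) j) i

lemma fderiv_apply_comp (g : (Fin m → ℝ) → Fin m → ℝ) (x w : Fin m → ℝ)
    (hg : ∀ i, DifferentiableAt ℝ (fun y => g y i) x) (i : Fin m) :
    fderiv ℝ g x w i = fderiv ℝ (fun y => g y i) x w := by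
  rw [show g = (fun y j => g y j) from rfl, fderiv_pi hg]
  rfl

lemma Napp_cvf (N : (Fin m → ℝ) → Matrix (Fin m) (Fin m) ℝ) (k : Fin m) :
    Napp N (cvf k) = fun y i => N y i k := by
  funext y i
  simp [Napp, cvf, Matrix.mulVec_single]

lemma key (N : (Fin m → ℝ) → Matrix (Fin m) (Fin m) ℝ)
    (hN : ContDiff ℝ (⊤ : ℕ∞) N) (k i : Fin m) (x : Fin m → ℝ) :
    defBracket N (cvf k) (cvf i) x i
      = pd k (fun y => N y i i) x - pd i (fun y => N y i k) x := by
  have hc : ∀ (j : Fin m) (z : Fin m → ℝ), fderiv ℝ (cvf j) z = 0 :=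
    fun j z => fderiv_const_apply _
  have hz : lieB (cvf k) (cvf i) = fun _ => (0 : Fin m → ℝ) := by
    funext y
    simp [lieB, hc]
  have hd : ∀ j l, ∀ z, DifferentiableAt ℝ (fun y => Napp N (cvf j) y l) z := by
    intro j l z
    rw [Napp_cvf]
    exact diff_entry N hN l j z
  have h1 : lieB (Napp N (cvf k)) (cvf i) x i = - pd i (fun y => N y i k) x := by
    simp only [lieB, hc, Pi.sub_apply]
    rw [fderiv_apply_comp _ _ _ (fun l => hd k l x) i]
    simp [Napp_cvf, pd, cvf]
  have h2 : lieB (cvf k) (Napp N (cvf i)) x i = pd k (fun y => N y i i) x := by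
    simp only [lieB, hc, Pi.sub_apply]
    rw [fderiv_apply_comp _ _ _ (fun l => hd i l x) i]
    simp [Napp_cvf, pd, cvf]
  have h3 : Napp N (lieB (cvf k) (cvf i)) x i = 0 := by
    rw [hz]; simp [Napp]
  simp only [defBracket, Pi.add_apply, Pi.sub_apply, h1, h2, h3]
  ring

/-- for a smooth Nijenhuis tensor `N` on `ℝ^m`, the constant volume form
`μ = dx^1∧⋯∧dx^m` and its dual top multivector `η = ∂_1∧⋯∧∂_m`, for every coordinate
vector field `X = ∂/∂x^k` one has
`(Lie^N_X η)⊗μ + η⊗(Lie_{NX} μ) = ⟨d(tr N), X⟩ η⊗μ`.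
In coordinates: the coefficient of `η` in `Lie^N_X η` is `Σ_i ([∂_k,∂_i]_N)^i` and the
coefficient of `μ` in `Lie_{NX} μ` is `div(NX) = Σ_i ∂N^i_k/∂x^i`, and their sum equals
`∂(tr N)/∂x^k`.  Hence the modular cocycle of the Lie algebroid `(TM,[·,·]_N,ρ_N)`
with respect to `(η, μ)` equals the 1-form `d(tr N)`. -/
theorem stmt1 (N : (Fin m → ℝ) → Matrix (Fin m) (Fin m) ℝ)
    (hN : ContDiff ℝ (⊤ : ℕ∞) N)
    (htorsion : ∀ k i : Fin m, torsion N (cvf k) (cvf i) = 0)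
    (k : Fin m) (x : Fin m → ℝ) :
    (∑ i, defBracket N (cvf k) (cvf i) x i) + (∑ i, pd i (fun y => N y i k) x) =
      pd k (fun y => (N y).trace) x := by
  have htr : pd k (fun y => (N y).trace) x = ∑ i, pd k (fun y => N y i i) x := by
    have : (fun y => (N y).trace) = fun y => ∑ i, N y i i := by
      funext y; simp [Matrix.trace, Matrix.diag]
    rw [pd, this, fderiv_fun_sum (fun i _ => diff_entry N hN i i x)]
    simp [pd]
  rw [htr]
  simp only [key N hN]
  rw [Finset.sum_sub_distrib]
  ring

end
end

section
/- If π₀ and π₁ are Poisson tensors on an oriented manifold with π₁ = Lie_Z π₀ for some vector field Z, then for any volume form μ the modular vector fields satisfy X¹_μ = Lie_Z X⁰_μ + X⁰_{div_μ(Z)}, where X⁰_{div_μ(Z)} = π₀^♯ d(div_μ Z). -/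
open scoped BigOperators Matrix

attribute [local instance] Matrix.normedAddCommGroup Matrix.normedSpace

noncomputable section

variable {m : ℕ}

/-- The modular vector field `X_μ = D_μ(π)` of a bivector field `π` relative to the
volume form `μ = f·dx^1∧⋯∧dx^m`:  `X_μ^i = f⁻¹ Σ_j ∂(f π^{ij})/∂x^j`. -/
def modVF (f : (Fin m → ℝ) → ℝ) (π : (Fin m → ℝ) → Matrix (Fin m) (Fin m) ℝ) :
    (Fin m → ℝ) → Fin m → ℝ :=
  fun x i => (f x)⁻¹ * ∑ j, pd j (fun y => f y * π y i j) x

/-- The Lie derivative `Lie_Z π = [Z,π]` of a bivector field along a vector field, in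
coordinates: `(Lie_Z π)^{ij} = Z^l ∂_l π^{ij} − π^{lj} ∂_l Z^i − π^{il} ∂_l Z^j`. -/
def lieBiv (Z : (Fin m → ℝ) → Fin m → ℝ)
    (π : (Fin m → ℝ) → Matrix (Fin m) (Fin m) ℝ) :
    (Fin m → ℝ) → Matrix (Fin m) (Fin m) ℝ :=
  fun x i j => fderiv ℝ (fun y => π y i j) x (Z x)
    - ∑ l, π x l j * pd l (fun y => Z y i) x
    - ∑ l, π x i l * pd l (fun y => Z y j) x

/-- The divergence `div_μ Z` relative to `μ = f·dx`: `f⁻¹ Σ_i ∂(f Z^i)/∂x^i`. -/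
def divVF (f : (Fin m → ℝ) → ℝ) (Z : (Fin m → ℝ) → Fin m → ℝ) :
    (Fin m → ℝ) → ℝ :=
  fun x => (f x)⁻¹ * ∑ i, pd i (fun y => f y * Z y i) x

/-! ### Auxiliary toolkit -/

theorem pdAux_contDiff (j : Fin m) {g : (Fin m → ℝ) → ℝ} (hg : ContDiff ℝ (⊤ : ℕ∞) g) :
    ContDiff ℝ (⊤ : ℕ∞) (pd j g) :=
  (hg.fderiv_right (le_refl _)).clm_apply contDiff_const

theorem pdAux_mul (u v : (Fin m → ℝ) → ℝ) (x : Fin m → ℝ)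
    (hu : DifferentiableAt ℝ u x) (hv : DifferentiableAt ℝ v x) (j : Fin m) :
    pd j (fun y => u y * v y) x = pd j u x * v x + u x * pd j v x := by
  simp only [pd, fderiv_fun_mul hu hv]; simp; ring

theorem pdAux_add (u v : (Fin m → ℝ) → ℝ) (x : Fin m → ℝ)
    (hu : DifferentiableAt ℝ u x) (hv : DifferentiableAt ℝ v x) (j : Fin m) :
    pd j (fun y => u y + v y) x = pd j u x + pd j v x := by
  simp only [pd, fderiv_fun_add hu hv]; simp

theorem pdAux_sub3 (u v w : (Fin m → ℝ) → ℝ) (x : Fin m → ℝ)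
    (hu : DifferentiableAt ℝ u x) (hv : DifferentiableAt ℝ v x)
    (hw : DifferentiableAt ℝ w x) (j : Fin m) :
    pd j (fun y => u y - v y - w y) x = pd j u x - pd j v x - pd j w x := by
  simp only [pd, fderiv_fun_sub (hu.fun_sub hv) hw, fderiv_fun_sub hu hv]; simp

theorem pdAux_inv (f : (Fin m → ℝ) → ℝ) (x : Fin m → ℝ)
    (hf : DifferentiableAt ℝ f x) (h0 : f x ≠ 0) (j : Fin m) :
    pd j (fun y => (f y)⁻¹) x = -((f x)⁻¹ * (f x)⁻¹) * pd j f x := by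
  have h : (fun y => (f y)⁻¹) = Inv.inv ∘ f := rfl
  rw [pd, h, fderiv_comp x (differentiableAt_inv h0) hf, fderiv_inv' h0]
  simp [pd]; ring

theorem pdAux_sum {ι : Type*} (s : Finset ι) (u : ι → (Fin m → ℝ) → ℝ) (x : Fin m → ℝ)
    (j : Fin m) (hu : ∀ i ∈ s, DifferentiableAt ℝ (u i) x) :
    pd j (fun y => ∑ i ∈ s, u i y) x = ∑ i ∈ s, pd j (u i) x := by
  simp [pd, fderiv_fun_sum hu]

theorem pdAux_fderiv_eq_sum (g : (Fin m → ℝ) → ℝ) (x v : Fin m → ℝ) :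
    fderiv ℝ g x v = ∑ l, v l * pd l g x := by
  have hv : v = ∑ l, v l • (Pi.single l (1:ℝ) : Fin m → ℝ) := by
    funext k; simp [Finset.sum_apply, Pi.single_apply, mul_comm]
  conv_lhs => rw [hv]
  simp [pd, smul_eq_mul]

theorem pdAux_comm (g : (Fin m → ℝ) → ℝ) (hg : ContDiff ℝ (⊤ : ℕ∞) g) (x : Fin m → ℝ)
    (j l : Fin m) : pd j (pd l g) x = pd l (pd j g) x := by
  have hd : ∀ y, HasFDerivAt g (fderiv ℝ g y) y :=
    fun y => (hg.differentiable (by simp) y).hasFDerivAt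
  have h2 : DifferentiableAt ℝ (fderiv ℝ g) x :=
    ((hg.fderiv_right (m := (⊤ : ℕ∞)) (le_refl _)).differentiable (by simp)) x
  have hsym := second_derivative_symmetric hd h2.hasFDerivAt
  have hkey : ∀ a b : Fin m,
      pd a (pd b g) x = fderiv ℝ (fderiv ℝ g) x (Pi.single a 1) (Pi.single b 1) := by
    intro a b
    have h3 : pd b g = fun y => (fderiv ℝ g y) (Pi.single b 1) := rfl
    rw [pd, h3, fderiv_clm_apply h2 (differentiableAt_const _)]
    simp
  rw [hkey, hkey, hsym]

theorem pdAux_sum_anti (E : Fin m → Fin m → ℝ) (h : ∀ j l, E j l + E l j = 0) :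
    ∑ j, ∑ l, E j l = 0 := by
  have h1 : (∑ j, ∑ l, E j l) = ∑ j, ∑ l, E l j := Finset.sum_comm
  have h2 : ((∑ j, ∑ l, E j l) + ∑ j, ∑ l, E l j) = ∑ j, ∑ l, (E j l + E l j) := by
    rw [← Finset.sum_add_distrib]
    exact Finset.sum_congr rfl fun j _ => (Finset.sum_add_distrib).symm
  rw [← h1] at h2
  simp only [h, Finset.sum_const_zero] at h2
  linarith

theorem pdAux_key (F : ℝ) (hF : F ≠ 0)
    (dF : Fin m → ℝ) (ddF : Fin m → Fin m → ℝ) (hddF : ∀ a b, ddF a b = ddF b a)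
    (P : Fin m → Fin m → ℝ) (hP : ∀ a b, P a b = -P b a)
    (dP : Fin m → Fin m → Fin m → ℝ)
    (ddP : Fin m → Fin m → Fin m → Fin m → ℝ)
    (hddP : ∀ k k' a b, ddP k k' a b = ddP k' k a b)
    (Zv : Fin m → ℝ) (dZ : Fin m → Fin m → ℝ)
    (ddZ : Fin m → Fin m → Fin m → ℝ) (hddZ : ∀ k k' a, ddZ k k' a = ddZ k' k a)
    (i : Fin m) :
    F⁻¹ * ∑ j, ∑ l,
      ((dF j * Zv l + F * dZ j l) * dP l i j + F * Zv l * ddP l j i j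
        - ((dF j * P l j + F * dP j l j) * dZ l i + F * P l j * ddZ l j i)
        - ((dF j * P i l + F * dP j i l) * dZ l j + F * P i l * ddZ l j j))
    =
    ((∑ l, Zv l *
        (-(F⁻¹ * F⁻¹) * dF l * ∑ j, (dF j * P i j + F * dP j i j)
          + F⁻¹ * ∑ j, (ddF j l * P i j + dF j * dP l i j + (dF l * dP j i j + F * ddP j l i j))))
      - ∑ l, (F⁻¹ * ∑ j, (dF j * P l j + F * dP j l j)) * dZ l i)
    + (- ∑ j, P i j *
        (-(F⁻¹ * F⁻¹) * dF j * ∑ l, (dF l * Zv l + F * dZ l l)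
          + F⁻¹ * ∑ l, (ddF l j * Zv l + dF l * dZ j l + (dF j * dZ l l + F * ddZ l j l)))) := by
  rw [← sub_eq_zero]
  have hL : (F⁻¹ * ∑ j, ∑ l,
      ((dF j * Zv l + F * dZ j l) * dP l i j + F * Zv l * ddP l j i j
        - ((dF j * P l j + F * dP j l j) * dZ l i + F * P l j * ddZ l j i)
        - ((dF j * P i l + F * dP j i l) * dZ l j + F * P i l * ddZ l j j)))
      = ∑ j, ∑ l, (F⁻¹ *
      ((dF j * Zv l + F * dZ j l) * dP l i j + F * Zv l * ddP l j i j
        - ((dF j * P l j + F * dP j l j) * dZ l i + F * P l j * ddZ l j i)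
        - ((dF j * P i l + F * dP j i l) * dZ l j + F * P i l * ddZ l j j))) := by
    rw [Finset.mul_sum]
    exact Finset.sum_congr rfl fun j _ => Finset.mul_sum _ _ _
  have hR1 : (∑ l, Zv l *
        (-(F⁻¹ * F⁻¹) * dF l * ∑ j, (dF j * P i j + F * dP j i j)
          + F⁻¹ * ∑ j, (ddF j l * P i j + dF j * dP l i j + (dF l * dP j i j + F * ddP j l i j))))
      = ∑ j, ∑ l, (Zv l *
        (-(F⁻¹ * F⁻¹) * dF l * (dF j * P i j + F * dP j i j)
          + F⁻¹ * (ddF j l * P i j + dF j * dP l i j + (dF l * dP j i j + F * ddP j l i j)))) := by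
    rw [Finset.sum_comm]
    refine Finset.sum_congr rfl fun l _ => ?_
    rw [Finset.mul_sum, Finset.mul_sum, ← Finset.sum_add_distrib, Finset.mul_sum]
  have hR2 : (∑ l, (F⁻¹ * ∑ j, (dF j * P l j + F * dP j l j)) * dZ l i)
      = ∑ j, ∑ l, (F⁻¹ * (dF j * P l j + F * dP j l j) * dZ l i) := by
    rw [Finset.sum_comm]
    refine Finset.sum_congr rfl fun l _ => ?_
    rw [Finset.mul_sum, Finset.sum_mul]
  have hR3 : (∑ j, P i j *
        (-(F⁻¹ * F⁻¹) * dF j * ∑ l, (dF l * Zv l + F * dZ l l)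
          + F⁻¹ * ∑ l, (ddF l j * Zv l + dF l * dZ j l + (dF j * dZ l l + F * ddZ l j l))))
      = ∑ j, ∑ l, (P i j *
        (-(F⁻¹ * F⁻¹) * dF j * (dF l * Zv l + F * dZ l l)
          + F⁻¹ * (ddF l j * Zv l + dF l * dZ j l + (dF j * dZ l l + F * ddZ l j l)))) := by
    refine Finset.sum_congr rfl fun j _ => ?_
    rw [Finset.mul_sum, Finset.mul_sum, ← Finset.sum_add_distrib, Finset.mul_sum]
  rw [hL, hR1, hR2, hR3]
  simp only [← Finset.sum_neg_distrib, ← Finset.sum_sub_distrib, ← Finset.sum_add_distrib]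
  apply pdAux_sum_anti
  intro j l
  rw [hddP l j i j, hddP l j i l, hddZ l j i, hddZ l j j, hddZ l j l, hddF l j,
    hP l j]
  field_simp
  ring

/-- if `π₀`, `π₁` are Poisson tensors with `π₁ = Lie_Z π₀` for some vector
field `Z`, then for any volume form `μ = f·dx` the modular vector fields satisfy
`X¹_μ = Lie_Z X⁰_μ + X⁰_{div_μ(Z)}`, where `X⁰_{div_μ(Z)} = π₀^♯ d(div_μ Z)` is the
`π₀`-hamiltonian vector field of `div_μ Z` (with the sign convention `X_h = −[π₀,h]`
of the paper, `X_h^i = −Σ_j π₀^{ij} ∂_j h`). -/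
theorem stmt6 (π₀ π₁ : (Fin m → ℝ) → Matrix (Fin m) (Fin m) ℝ)
    (Z : (Fin m → ℝ) → Fin m → ℝ)
    (hπ₀ : ContDiff ℝ (⊤ : ℕ∞) π₀) (hπ₁ : ContDiff ℝ (⊤ : ℕ∞) π₁) (hZ : ContDiff ℝ (⊤ : ℕ∞) Z)
    (hskew₀ : ∀ x, (π₀ x)ᵀ = -π₀ x)
    (hJacobi₀ : ∀ x (i j k : Fin m),
      ∑ l, (π₀ x l i * pd l (fun y => π₀ y j k) x
          + π₀ x l j * pd l (fun y => π₀ y k i) x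
          + π₀ x l k * pd l (fun y => π₀ y i j) x) = 0)
    (hJacobi₁ : ∀ x (i j k : Fin m),
      ∑ l, (π₁ x l i * pd l (fun y => π₁ y j k) x
          + π₁ x l j * pd l (fun y => π₁ y k i) x
          + π₁ x l k * pd l (fun y => π₁ y i j) x) = 0)
    (hdef : ∀ x, π₁ x = lieBiv Z π₀ x)
    (f : (Fin m → ℝ) → ℝ) (hf : ContDiff ℝ (⊤ : ℕ∞) f) (hf0 : ∀ x, f x ≠ 0) :
    ∀ x i, modVF f π₁ x i =
      (fderiv ℝ (fun y => modVF f π₀ y i) x (Z x)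
        - ∑ l, modVF f π₀ x l * pd l (fun y => Z y i) x)
      + (- ∑ j, π₀ x i j * pd j (divVF f Z) x) := by
  intro x i
  -- basic smoothness of components
  have hPc : ∀ a b : Fin m, ContDiff ℝ (⊤ : ℕ∞) (fun y => π₀ y a b) :=
    fun a b => (contDiff_pi.mp ((contDiff_pi.mp hπ₀) a)) b
  have hZc : ∀ a : Fin m, ContDiff ℝ (⊤ : ℕ∞) (fun y => Z y a) := fun a => (contDiff_pi.mp hZ) a
  have hfPc : ∀ a b : Fin m, ContDiff ℝ (⊤ : ℕ∞) (fun y => f y * π₀ y a b) :=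
    fun a b => hf.mul (hPc a b)
  have hfZc : ∀ a : Fin m, ContDiff ℝ (⊤ : ℕ∞) (fun y => f y * Z y a) := fun a => hf.mul (hZc a)
  have dAt : ∀ {g : (Fin m → ℝ) → ℝ}, ContDiff ℝ (⊤ : ℕ∞) g → ∀ y, DifferentiableAt ℝ g y :=
    fun hg y => (hg.differentiable (by simp)) y
  -- pointwise skew-symmetry
  have hP : ∀ a b : Fin m, π₀ x a b = -π₀ x b a := by
    intro a b
    have h : (π₀ x)ᵀ b a = (-π₀ x) b a := by rw [hskew₀ x]
    simpa [Matrix.transpose_apply] using h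
  -- symmetry of second derivatives
  have hddF : ∀ a b : Fin m, pd b (pd a f) x = pd a (pd b f) x :=
    fun a b => pdAux_comm f hf x b a
  have hddP : ∀ k k' a b : Fin m,
      pd k' (pd k (fun y => π₀ y a b)) x = pd k (pd k' (fun y => π₀ y a b)) x :=
    fun k k' a b => pdAux_comm _ (hPc a b) x k' k
  have hddZ : ∀ k k' a : Fin m,
      pd k' (pd k (fun y => Z y a)) x = pd k (pd k' (fun y => Z y a)) x :=
    fun k k' a => pdAux_comm _ (hZc a) x k' k
  -- expansion of first derivatives of f·π₀ and f·Z as functions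
  have hGfun : ∀ j a b : Fin m, (pd j (fun z => f z * π₀ z a b))
      = fun y => pd j f y * π₀ y a b + f y * pd j (fun z => π₀ z a b) y :=
    fun j a b => funext fun y => pdAux_mul _ _ y (dAt hf y) (dAt (hPc a b) y) j
  have hHfun : ∀ j a : Fin m, (pd j (fun z => f z * Z z a))
      = fun y => pd j f y * Z y a + f y * pd j (fun z => Z z a) y :=
    fun j a => funext fun y => pdAux_mul _ _ y (dAt hf y) (dAt (hZc a) y) j
  -- second derivatives of f·π₀
  have hGG : ∀ j l a b : Fin m, pd l (pd j (fun z => f z * π₀ z a b)) x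
      = pd l (pd j f) x * π₀ x a b + pd j f x * pd l (fun z => π₀ z a b) x
        + (pd l f x * pd j (fun z => π₀ z a b) x
          + f x * pd l (pd j (fun z => π₀ z a b)) x) := by
    intro j l a b
    rw [hGfun j a b]
    have e1 : pd l (fun y => pd j f y * π₀ y a b + f y * pd j (fun z => π₀ z a b) y) x
        = pd l (fun y => pd j f y * π₀ y a b) x
          + pd l (fun y => f y * pd j (fun z => π₀ z a b) y) x :=
      pdAux_add _ _ _ (dAt ((pdAux_contDiff j hf).mul (hPc a b)) x)
        (dAt (hf.mul (pdAux_contDiff j (hPc a b))) x) l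
    have e2 : pd l (fun y => pd j f y * π₀ y a b) x
        = pd l (pd j f) x * π₀ x a b + pd j f x * pd l (fun z => π₀ z a b) x :=
      pdAux_mul _ _ _ (dAt (pdAux_contDiff j hf) x) (dAt (hPc a b) x) l
    have e3 : pd l (fun y => f y * pd j (fun z => π₀ z a b) y) x
        = pd l f x * pd j (fun z => π₀ z a b) x
          + f x * pd l (pd j (fun z => π₀ z a b)) x :=
      pdAux_mul _ _ _ (dAt hf x) (dAt (pdAux_contDiff j (hPc a b)) x) l
    rw [e1, e2, e3]
  -- second derivatives of f·Z
  have hHH : ∀ j l a : Fin m, pd l (pd j (fun z => f z * Z z a)) x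
      = pd l (pd j f) x * Z x a + pd j f x * pd l (fun z => Z z a) x
        + (pd l f x * pd j (fun z => Z z a) x + f x * pd l (pd j (fun z => Z z a)) x) := by
    intro j l a
    rw [hHfun j a]
    have e1 : pd l (fun y => pd j f y * Z y a + f y * pd j (fun z => Z z a) y) x
        = pd l (fun y => pd j f y * Z y a) x
          + pd l (fun y => f y * pd j (fun z => Z z a) y) x :=
      pdAux_add _ _ _ (dAt ((pdAux_contDiff j hf).mul (hZc a)) x)
        (dAt (hf.mul (pdAux_contDiff j (hZc a))) x) l
    have e2 : pd l (fun y => pd j f y * Z y a) x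
        = pd l (pd j f) x * Z x a + pd j f x * pd l (fun z => Z z a) x :=
      pdAux_mul _ _ _ (dAt (pdAux_contDiff j hf) x) (dAt (hZc a) x) l
    have e3 : pd l (fun y => f y * pd j (fun z => Z z a) y) x
        = pd l f x * pd j (fun z => Z z a) x + f x * pd l (pd j (fun z => Z z a)) x :=
      pdAux_mul _ _ _ (dAt hf x) (dAt (pdAux_contDiff j (hZc a)) x) l
    rw [e1, e2, e3]
  -- the function f·π₁^{ij} written out via `hdef`
  have hfun : ∀ j : Fin m, (fun y => f y * π₁ y i j)
      = fun y => ∑ l, (f y * Z y l * pd l (fun z => π₀ z i j) y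
          - f y * π₀ y l j * pd l (fun z => Z z i) y
          - f y * π₀ y i l * pd l (fun z => Z z j) y) := by
    intro j
    funext y
    have h0 : π₁ y i j = fderiv ℝ (fun z => π₀ z i j) y (Z y)
        - ∑ l, π₀ y l j * pd l (fun z => Z z i) y
        - ∑ l, π₀ y i l * pd l (fun z => Z z j) y := by
      rw [hdef y]; rfl
    rw [h0, pdAux_fderiv_eq_sum (fun z => π₀ z i j) y (Z y)]
    rw [mul_sub, mul_sub, Finset.mul_sum, Finset.mul_sum, Finset.mul_sum,
      ← Finset.sum_sub_distrib, ← Finset.sum_sub_distrib]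
    exact Finset.sum_congr rfl fun l _ => by ring
  -- fully expanded form of the left-hand side
  have eq_L : modVF f π₁ x i = (f x)⁻¹ * ∑ j, ∑ l,
      ((pd j f x * Z x l + f x * pd j (fun z => Z z l) x) * pd l (fun z => π₀ z i j) x
        + f x * Z x l * pd j (pd l (fun z => π₀ z i j)) x
        - ((pd j f x * π₀ x l j + f x * pd j (fun z => π₀ z l j) x) * pd l (fun z => Z z i) x
          + f x * π₀ x l j * pd j (pd l (fun z => Z z i)) x)
        - ((pd j f x * π₀ x i l + f x * pd j (fun z => π₀ z i l) x) * pd l (fun z => Z z j) x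
          + f x * π₀ x i l * pd j (pd l (fun z => Z z j)) x)) := by
    simp only [modVF]
    congr 1
    refine Finset.sum_congr rfl fun j _ => ?_
    rw [hfun j]
    have hps : pd j (fun y => ∑ l, (f y * Z y l * pd l (fun z => π₀ z i j) y
          - f y * π₀ y l j * pd l (fun z => Z z i) y
          - f y * π₀ y i l * pd l (fun z => Z z j) y)) x
        = ∑ l, pd j (fun y => (f y * Z y l * pd l (fun z => π₀ z i j) y
          - f y * π₀ y l j * pd l (fun z => Z z i) y
          - f y * π₀ y i l * pd l (fun z => Z z j) y)) x :=
      pdAux_sum _ _ _ _ (fun l _ => dAt ((((hfZc l).mul (pdAux_contDiff l (hPc i j))).sub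
        ((hfPc l j).mul (pdAux_contDiff l (hZc i)))).sub
        ((hfPc i l).mul (pdAux_contDiff l (hZc j)))) x)
    rw [hps]
    refine Finset.sum_congr rfl fun l _ => ?_
    have h1 : pd j (fun y => f y * Z y l * pd l (fun z => π₀ z i j) y
          - f y * π₀ y l j * pd l (fun z => Z z i) y
          - f y * π₀ y i l * pd l (fun z => Z z j) y) x
        = pd j (fun y => f y * Z y l * pd l (fun z => π₀ z i j) y) x
          - pd j (fun y => f y * π₀ y l j * pd l (fun z => Z z i) y) x
          - pd j (fun y => f y * π₀ y i l * pd l (fun z => Z z j) y) x :=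
      pdAux_sub3 _ _ _ _ (dAt ((hfZc l).mul (pdAux_contDiff l (hPc i j))) x)
        (dAt ((hfPc l j).mul (pdAux_contDiff l (hZc i))) x)
        (dAt ((hfPc i l).mul (pdAux_contDiff l (hZc j))) x) j
    have h2 : pd j (fun y => f y * Z y l * pd l (fun z => π₀ z i j) y) x
        = pd j (fun y => f y * Z y l) x * pd l (fun z => π₀ z i j) x
          + f x * Z x l * pd j (pd l (fun z => π₀ z i j)) x :=
      pdAux_mul _ _ _ (dAt (hfZc l) x) (dAt (pdAux_contDiff l (hPc i j)) x) j
    have h2' : pd j (fun y => f y * Z y l) x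
        = pd j f x * Z x l + f x * pd j (fun z => Z z l) x :=
      pdAux_mul _ _ _ (dAt hf x) (dAt (hZc l) x) j
    have h3 : pd j (fun y => f y * π₀ y l j * pd l (fun z => Z z i) y) x
        = pd j (fun y => f y * π₀ y l j) x * pd l (fun z => Z z i) x
          + f x * π₀ x l j * pd j (pd l (fun z => Z z i)) x :=
      pdAux_mul _ _ _ (dAt (hfPc l j) x) (dAt (pdAux_contDiff l (hZc i)) x) j
    have h3' : pd j (fun y => f y * π₀ y l j) x
        = pd j f x * π₀ x l j + f x * pd j (fun z => π₀ z l j) x :=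
      pdAux_mul _ _ _ (dAt hf x) (dAt (hPc l j) x) j
    have h4 : pd j (fun y => f y * π₀ y i l * pd l (fun z => Z z j) y) x
        = pd j (fun y => f y * π₀ y i l) x * pd l (fun z => Z z j) x
          + f x * π₀ x i l * pd j (pd l (fun z => Z z j)) x :=
      pdAux_mul _ _ _ (dAt (hfPc i l) x) (dAt (pdAux_contDiff l (hZc j)) x) j
    have h4' : pd j (fun y => f y * π₀ y i l) x
        = pd j f x * π₀ x i l + f x * pd j (fun z => π₀ z i l) x :=
      pdAux_mul _ _ _ (dAt hf x) (dAt (hPc i l) x) j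
    rw [h1, h2, h2', h3, h3', h4, h4']
  -- the modular vector field of π₀ and its derivatives
  have hsumC : ContDiff ℝ (⊤ : ℕ∞) (fun y => ∑ j, pd j (fun z => f z * π₀ z i j) y) :=
    ContDiff.sum fun j _ => pdAux_contDiff j (hfPc i j)
  have hR1 : fderiv ℝ (fun y => modVF f π₀ y i) x (Z x)
      = ∑ l, Z x l * pd l (fun y => modVF f π₀ y i) x :=
    pdAux_fderiv_eq_sum _ x (Z x)
  have hpdmod : ∀ l : Fin m, pd l (fun y => modVF f π₀ y i) x
      = -((f x)⁻¹ * (f x)⁻¹) * pd l f x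
          * ∑ j, (pd j f x * π₀ x i j + f x * pd j (fun z => π₀ z i j) x)
        + (f x)⁻¹ * ∑ j, (pd l (pd j f) x * π₀ x i j + pd j f x * pd l (fun z => π₀ z i j) x
          + (pd l f x * pd j (fun z => π₀ z i j) x + f x * pd l (pd j (fun z => π₀ z i j)) x)) := by
    intro l
    have h0 : pd l (fun y => modVF f π₀ y i) x
        = pd l (fun y => (f y)⁻¹) x * (∑ j, pd j (fun z => f z * π₀ z i j) x)
          + (f x)⁻¹ * pd l (fun y => ∑ j, pd j (fun z => f z * π₀ z i j) y) x :=
      pdAux_mul _ _ _ (dAt (hf.inv hf0) x) (dAt hsumC x) l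
    have h1 : pd l (fun y => (f y)⁻¹) x = -((f x)⁻¹ * (f x)⁻¹) * pd l f x :=
      pdAux_inv f x (dAt hf x) (hf0 x) l
    have h2 : pd l (fun y => ∑ j, pd j (fun z => f z * π₀ z i j) y) x
        = ∑ j, pd l (pd j (fun z => f z * π₀ z i j)) x :=
      pdAux_sum _ _ _ _ (fun j _ => dAt (pdAux_contDiff j (hfPc i j)) x)
    rw [h0, h1, h2]
    congr 1
    · congr 1
      exact Finset.sum_congr rfl fun j _ => pdAux_mul _ _ _ (dAt hf x) (dAt (hPc i j) x) j
    · congr 1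
      exact Finset.sum_congr rfl fun j _ => hGG j l i j
  have eq_R2 : ∀ l : Fin m, modVF f π₀ x l
      = (f x)⁻¹ * ∑ j, (pd j f x * π₀ x l j + f x * pd j (fun z => π₀ z l j) x) := by
    intro l
    simp only [modVF]
    congr 1
    exact Finset.sum_congr rfl fun j _ => pdAux_mul _ _ _ (dAt hf x) (dAt (hPc l j) x) j
  -- the divergence term
  have hdivC : ContDiff ℝ (⊤ : ℕ∞) (fun y => ∑ a, pd a (fun z => f z * Z z a) y) :=
    ContDiff.sum fun a _ => pdAux_contDiff a (hfZc a)
  have eq_R3 : ∀ j : Fin m, pd j (divVF f Z) x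
      = -((f x)⁻¹ * (f x)⁻¹) * pd j f x
          * ∑ l, (pd l f x * Z x l + f x * pd l (fun z => Z z l) x)
        + (f x)⁻¹ * ∑ l, (pd j (pd l f) x * Z x l + pd l f x * pd j (fun z => Z z l) x
          + (pd j f x * pd l (fun z => Z z l) x + f x * pd j (pd l (fun z => Z z l)) x)) := by
    intro j
    have h0 : pd j (divVF f Z) x
        = pd j (fun y => (f y)⁻¹) x * (∑ l, pd l (fun z => f z * Z z l) x)
          + (f x)⁻¹ * pd j (fun y => ∑ l, pd l (fun z => f z * Z z l) y) x :=
      pdAux_mul _ _ _ (dAt (hf.inv hf0) x) (dAt hdivC x) j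
    have h1 : pd j (fun y => (f y)⁻¹) x = -((f x)⁻¹ * (f x)⁻¹) * pd j f x :=
      pdAux_inv f x (dAt hf x) (hf0 x) j
    have h2 : pd j (fun y => ∑ l, pd l (fun z => f z * Z z l) y) x
        = ∑ l, pd j (pd l (fun z => f z * Z z l)) x :=
      pdAux_sum _ _ _ _ (fun l _ => dAt (pdAux_contDiff l (hfZc l)) x)
    rw [h0, h1, h2]
    congr 1
    · congr 1
      exact Finset.sum_congr rfl fun l _ => pdAux_mul _ _ _ (dAt hf x) (dAt (hZc l) x) l
    · congr 1
      exact Finset.sum_congr rfl fun l _ => hHH l j l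
  -- assemble and conclude by the algebraic identity
  rw [eq_L, hR1]
  simp only [hpdmod, eq_R2, eq_R3]
  exact pdAux_key (f x) (hf0 x) (fun a => pd a f x) (fun a b => pd b (pd a f) x) hddF
    (fun a b => π₀ x a b) hP (fun k a b => pd k (fun z => π₀ z a b) x)
    (fun k k' a b => pd k' (pd k (fun z => π₀ z a b)) x) hddP
    (fun a => Z x a) (fun k a => pd k (fun z => Z z a) x)
    (fun k k' a => pd k' (pd k (fun z => Z z a)) x) hddZ i



end
end

section
/- On a Poisson-Nijenhuis manifold (M, π₀, N), the vector field X_N := X¹_μ − N X⁰_μ is independent of the choice of volume form μ: for any two volume forms μ, μ′, X¹_μ − N X⁰_μ = X¹_{μ′} − N X⁰_{μ′}. -/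
open scoped BigOperators Matrix

attribute [local instance] Matrix.normedAddCommGroup Matrix.normedSpace

noncomputable section

variable {m : ℕ}

lemma pd_mul (g h : (Fin m → ℝ) → ℝ) (x : Fin m → ℝ) (j : Fin m)
    (hg : DifferentiableAt ℝ g x) (hh : DifferentiableAt ℝ h x) :
    pd j (fun y => g y * h y) x = pd j g x * h x + g x * pd j h x := by
  simp only [pd, fderiv_fun_mul hg hh]; simp; ring

lemma entry_diff (π : (Fin m → ℝ) → Matrix (Fin m) (Fin m) ℝ) (hπ : ContDiff ℝ (⊤ : ℕ∞) π)
    (a b : Fin m) : Differentiable ℝ (fun y => π y a b) := by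
  have h1 : Differentiable ℝ π := hπ.differentiable (by simp)
  exact fun x => (((ContinuousLinearMap.proj (R := ℝ) (φ := fun _ : Fin m => ℝ) b).comp
    (ContinuousLinearMap.proj (R := ℝ) (φ := fun _ : Fin m => Fin m → ℝ) a)).differentiableAt).comp
      x (h1 x)

lemma modVF_expand (g : (Fin m → ℝ) → ℝ) (hg : Differentiable ℝ g) (hg0 : ∀ x, g x ≠ 0)
    (π : (Fin m → ℝ) → Matrix (Fin m) (Fin m) ℝ)
    (hπ : ∀ a b, Differentiable ℝ (fun y => π y a b)) (x : Fin m → ℝ) (a : Fin m) :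
    modVF g π x a = (∑ j, pd j (fun y => π y a j) x)
      + ∑ j, ((g x)⁻¹ * pd j g x) * π x a j := by
  have h : ∀ j : Fin m, pd j (fun y => g y * π y a j) x
      = pd j g x * π x a j + g x * pd j (fun y => π y a j) x :=
    fun j => pd_mul g _ x j (hg x) (hπ a j x)
  simp only [modVF, h]
  rw [Finset.sum_add_distrib, mul_add, Finset.mul_sum, Finset.mul_sum, add_comm]
  congr 1
  · exact Finset.sum_congr rfl fun j _ => by rw [inv_mul_cancel_left₀ (hg0 x)]
  · exact Finset.sum_congr rfl fun j _ => by ring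

/-- on a Poisson-Nijenhuis manifold `(M, π₀, N)` with `π₁ = Nπ₀`, the
vector field `X_N := X¹_μ − N X⁰_μ` is independent of the choice of volume form:
for any two volume forms `μ = f·dx` and `μ' = f'·dx`,
`X¹_μ − N X⁰_μ = X¹_{μ'} − N X⁰_{μ'}`. -/
theorem stmt7 (π₀ N : (Fin m → ℝ) → Matrix (Fin m) (Fin m) ℝ)
    (hπ₀ : ContDiff ℝ (⊤ : ℕ∞) π₀) (hN : ContDiff ℝ (⊤ : ℕ∞) N)
    (hskew : ∀ x, (π₀ x)ᵀ = -π₀ x)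
    -- `π₀` is Poisson (Jacobi identity):
    (hJacobi : ∀ x (i j k : Fin m),
      ∑ l, (π₀ x l i * pd l (fun y => π₀ y j k) x
          + π₀ x l j * pd l (fun y => π₀ y k i) x
          + π₀ x l k * pd l (fun y => π₀ y i j) x) = 0)
    -- `N` has vanishing Nijenhuis torsion:
    (htorsion : ∀ x (i j k : Fin m),
      ∑ l, (N x l j * pd l (fun y => N y i k) x - N x l k * pd l (fun y => N y i j) x
          - N x i l * (pd j (fun y => N y l k) x - pd k (fun y => N y l j) x)) = 0)
    -- first compatibility: `N π₀^♯ = π₀^♯ N^*`: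
    (hcompat₁ : ∀ x (i j : Fin m),
      ∑ l, N x i l * π₀ x l j = ∑ k, π₀ x i k * N x j k)
    -- second compatibility: `[α,β]_{π₁} = [α,β]_{π₀}^{N^*}` in coordinates:
    (hcompat₂ : ∀ x (i j k : Fin m),
      ∑ l, (π₀ x l j * pd l (fun y => N y i k) x
          + π₀ x i l * pd l (fun y => N y j k) x
          - π₀ x l j * pd k (fun y => N y i l) x
          - N x l k * pd l (fun y => π₀ y i j) x
          + N x j l * pd k (fun y => π₀ y i l) x) = 0)
    -- `π₁ = N π₀`:
    (π₁ : (Fin m → ℝ) → Matrix (Fin m) (Fin m) ℝ)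
    (hπ₁ : ∀ x i j, π₁ x i j = ∑ k, π₀ x i k * N x j k)
    (f f' : (Fin m → ℝ) → ℝ) (hf : ContDiff ℝ (⊤ : ℕ∞) f) (hf' : ContDiff ℝ (⊤ : ℕ∞) f')
    (hf0 : ∀ x, f x ≠ 0) (hf'0 : ∀ x, f' x ≠ 0) :
    ∀ x i, modVF f π₁ x i - (N x).mulVec (modVF f π₀ x) i
      = modVF f' π₁ x i - (N x).mulVec (modVF f' π₀ x) i := by
  -- entrywise differentiability
  have hd0 : ∀ a b, Differentiable ℝ (fun y => π₀ y a b) := entry_diff π₀ hπ₀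
  have hdN : ∀ a b, Differentiable ℝ (fun y => N y a b) := entry_diff N hN
  have hd1 : ∀ a b, Differentiable ℝ (fun y => π₁ y a b) := by
    intro a b
    have : (fun y => π₁ y a b) = fun y => ∑ k, π₀ y a k * N y b k := by
      funext y; exact hπ₁ y a b
    rw [this]
    exact Differentiable.fun_sum fun k _ => (hd0 a k).mul (hdN b k)
  -- π₁ = N π₀ as matrices
  have hNπ : ∀ x (i j : Fin m), π₁ x i j = ∑ l, N x i l * π₀ x l j := by
    intro x i j; rw [hπ₁ x i j, ← hcompat₁ x i j]
  -- sharp identity: for any covector α, π₁^♯ α = N (π₀^♯ α)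
  have sharp : ∀ (x : Fin m → ℝ) (i : Fin m) (α : Fin m → ℝ),
      ∑ j, α j * π₁ x i j = ∑ k, N x i k * ∑ j, α j * π₀ x k j := by
    intro x i α
    simp only [hNπ, Finset.mul_sum]
    rw [Finset.sum_comm]
    exact Finset.sum_congr rfl fun k _ => Finset.sum_congr rfl fun j _ => by ring
  intro x i
  have e1 := modVF_expand f (hf.differentiable (by simp)) hf0 π₁ hd1 x i
  have e1' := modVF_expand f' (hf'.differentiable (by simp)) hf'0 π₁ hd1 x i
  have e0 := fun k => modVF_expand f (hf.differentiable (by simp)) hf0 π₀ hd0 x k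
  have e0' := fun k => modVF_expand f' (hf'.differentiable (by simp)) hf'0 π₀ hd0 x k
  have s1 := sharp x i (fun j => (f x)⁻¹ * pd j f x)
  have s1' := sharp x i (fun j => (f' x)⁻¹ * pd j f' x)
  simp only [Matrix.mulVec, dotProduct, e1, e1', e0, e0', mul_add,
    Finset.sum_add_distrib]
  rw [s1, s1']
  ring


end
end

section
/- On ℝ^{2n} (with n ≥ 1), the relative modular vector field of the harmonic oscillator PN structure, X_N = π₁^♯ d(Σ log I_i) (defined away from the zero set of the I_i), is NOT globally hamiltonian with respect to π₁: there is no smooth function H on all of ℝ^{2n} with π₁^♯ dH = X_N. Equivalently, there is no smooth H on ℝ^{2n} such that on the set where all I_i ≠ 0, H differs from Σ log I_i by a locally constant function on each connected component, since Σ log I_i is unbounded near the set {I_i = 0}. -/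
open scoped BigOperators

noncomputable section

variable {n : ℕ}

/-- Phase space `ℝ^{2n}` with coordinates `(q, p)`. -/
abbrev Phase (n : ℕ) := (Fin n → ℝ) × (Fin n → ℝ)

/-- `∂h/∂q_i`. -/
def pdQ (i : Fin n) (h : Phase n → ℝ) (z : Phase n) : ℝ :=
  fderiv ℝ h z (Pi.single i 1, 0)

/-- `∂h/∂p_i`. -/
def pdP (i : Fin n) (h : Phase n → ℝ) (z : Phase n) : ℝ :=
  fderiv ℝ h z (0, Pi.single i 1)

/-- For a bivector `π = Σ c_i ∂_{p_i}∧∂_{q_i}`, the hamiltonian vector field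
`π^♯ dh = Σ c_i ((∂h/∂p_i) ∂_{q_i} − (∂h/∂q_i) ∂_{p_i})`. -/
def sharpD (c : Phase n → Fin n → ℝ) (h : Phase n → ℝ) (z : Phase n) : Phase n :=
  (fun i => c z i * pdP i h z, fun i => -(c z i) * pdQ i h z)

/-- `I_i = (p_i² + q_i²)/2`. -/
def II (i : Fin n) (z : Phase n) : ℝ := ((z.2 i) ^ 2 + (z.1 i) ^ 2) / 2

/-- on `ℝ^{2n}` (`n ≥ 1`) the relative modular vector field of the
harmonic oscillator PN structure, `X_N = π₁^♯ d(Σ log I_i)` with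
`π₁ = Σ I_i ∂_{p_i}∧∂_{q_i}` (defined away from the zeros of the `I_i`, where it
equals the globally smooth vector field `X₁ = Σ (p_i ∂_{q_i} − q_i ∂_{p_i})`), is NOT
globally hamiltonian with respect to `π₁`: there is no smooth function `H` on all of
`ℝ^{2n}` with `π₁^♯ dH = X_N`. -/
theorem stmt12 (hn : 1 ≤ n) :
    ¬ ∃ H : Phase n → ℝ, ContDiff ℝ (⊤ : ℕ∞) H ∧
      ∀ z : Phase n,
        sharpD (fun w i => II i w) H z = ((fun i => z.2 i, fun i => -z.1 i) : Phase n) := by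
  rintro ⟨H, hH, heq⟩
  have i : Fin n := ⟨0, hn⟩
  -- f t = ∂H/∂p_i at the point (0, t e_i)
  set f : ℝ → ℝ := fun t => pdP i H ((0, Pi.single i t) : Phase n) with hf
  have hfc : Continuous f := by
    have h1 : Continuous (fderiv ℝ H) := hH.continuous_fderiv (by simp)
    have h2 : Continuous (fun t : ℝ => ((0, Pi.single i t) : Phase n)) := by
      refine continuous_const.prodMk ?_
      refine continuous_pi fun j => ?_
      simp only [Pi.single_apply]
      exact Continuous.if_const _ continuous_id continuous_const
    exact (h1.comp h2).clm_apply continuous_const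
  -- for t ≠ 0, f t = 2 / t
  have key : ∀ t : ℝ, t ≠ 0 → f t = 2 / t := by
    intro t ht
    have h := heq ((0, Pi.single i t) : Phase n)
    have h1 := congrFun (congrArg Prod.fst h) i
    simp only [sharpD, II] at h1
    simp only [Pi.single_eq_same, Pi.zero_apply] at h1
    -- h1 : (t^2 + 0^2)/2 * pdP i H _ = t
    have ht2 : (t ^ 2 + (0:ℝ) ^ 2) / 2 ≠ 0 := by positivity
    field_simp [hf] at h1 ⊢
    exact mul_left_cancel₀ ht (by simp only [hf] at h1 ⊢; linarith [h1, sq t] : t * (t * f t) = t * 2)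
  -- contradiction: f(1/(k+1)) = 2(k+1) → ∞ but also → f 0
  have hlim : Filter.Tendsto (fun k : ℕ => f (1 / (k + 1))) Filter.atTop (nhds (f 0)) := by
    refine (hfc.tendsto 0).comp ?_
    exact tendsto_one_div_add_atTop_nhds_zero_nat
  have hval : ∀ k : ℕ, f (1 / (k + 1)) = 2 * (k + 1) := by
    intro k
    have hk : (1 : ℝ) / (k + 1) ≠ 0 := by positivity
    rw [key _ hk]
    field_simp
  have hlim2 : Filter.Tendsto (fun k : ℕ => (2 : ℝ) * (k + 1)) Filter.atTop Filter.atTop := by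
    apply Filter.Tendsto.const_mul_atTop (by norm_num : (0:ℝ) < 2)
    exact Filter.tendsto_atTop_add_const_right _ 1 tendsto_natCast_atTop_atTop
  have : Filter.Tendsto (fun k : ℕ => f (1 / (k + 1))) Filter.atTop Filter.atTop :=
    hlim2.congr fun k => (hval k).symm
  exact (not_tendsto_atTop_of_tendsto_nhds hlim) this


end
end
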